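/- arXiv:2310.06591 — 4 statements merged into one kernel-verified Lean document; each statement's English description precedes it below -/
import Mathlib

section
/- Let Ω ⊆ ℝ^d be an open set of finite Lebesgue measure and let η ∈ C_c^∞(ℝ^d;ℝ^d) be a smooth compactly supported vector field. Then the function t ↦ |(id + tη)(Ω)| is differentiable at t = 0 and its derivative there equals ∫_Ω div η(x) dx. -/
/-!
For small `t`, the map `x ↦ x + t • η x` is a Lipschitz-small perturbation of the identity, hence
injective, with Jacobian `1 + t • Dη x` of positive determinant. The change of variables formula
turns `|(id + tη)(Ω)|` into `∫ x in Ω, det (1 + t • Dη x)`. The determinant is smooth with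
derivative `trace` at `1`, and `Dη` is bounded, so one may differentiate under the integral sign.
-/

open MeasureTheory

/-- The divergence of a vector field on `ℝ^d`: the trace of its Jacobian. -/
noncomputable def vdiv {d : ℕ} (η : EuclideanSpace ℝ (Fin d) → EuclideanSpace ℝ (Fin d))
    (x : EuclideanSpace ℝ (Fin d)) : ℝ :=
  LinearMap.trace ℝ (EuclideanSpace ℝ (Fin d)) (fderiv ℝ η x).toLinearMap

open Filter Topology
open scoped NNReal

namespace ContinuousLinearMap

variable {E : Type*} [NormedAddCommGroup E] [NormedSpace ℝ E] [FiniteDimensional ℝ E]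

theorem contDiff_det {n : WithTop ℕ∞} : ContDiff ℝ n fun A : E →L[ℝ] E => A.det := by
  let b := Module.finBasis ℝ E
  have hentry : ∀ i j, ContDiff ℝ n fun A : E →L[ℝ] E => b.repr (A (b j)) i := fun i j =>
    ((LinearMap.toContinuousLinearMap (b.coord i)).comp (apply ℝ E (b j))).contDiff
  have hdet : (fun A : E →L[ℝ] E => A.det) = fun A =>
      ∑ σ : Equiv.Perm _, (Equiv.Perm.sign σ : ℝ) * ∏ i, b.repr (A (b i)) (σ i) := by
    ext A
    rw [det, ← LinearMap.det_toMatrix b, Matrix.det_apply']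
    simp [LinearMap.toMatrix_apply]
  rw [hdet]
  exact ContDiff.sum fun σ _ => contDiff_const.mul (contDiff_prod fun i _ => hentry _ _)

open Polynomial in
theorem hasDerivAt_det_one_add_smul (A : E →L[ℝ] E) :
    HasDerivAt (fun t : ℝ => (1 + t • A).det) (LinearMap.trace ℝ E A) 0 := by
  let b := Module.finBasis ℝ E
  set p := Matrix.det (1 + (X : ℝ[X]) • (LinearMap.toMatrix b b A).map C)
  have hp : ∀ t : ℝ, (1 + t • A).det = p.eval t := by
    intro t
    rw [det, ← LinearMap.det_toMatrix b, eval_det]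
    congr 1
    ext i j
    simp [mul_comm]
  simp_rw [hp]
  rw [LinearMap.trace_eq_matrix_trace ℝ b, ← Matrix.derivative_det_one_add_X_smul]
  exact p.hasDerivAt 0

theorem hasDerivAt_det_add_smul (A B : E →L[ℝ] E) (t : ℝ) :
    HasDerivAt (fun s : ℝ => (A + s • B).det)
      (fderiv ℝ (fun C : E →L[ℝ] E => C.det) (A + t • B) B) t := by
  have hline : HasDerivAt (fun s : ℝ => A + s • B) B t := by
    simpa using ((hasDerivAt_id t).smul_const B).const_add A
  exact ((contDiff_det (n := 1)).differentiable one_ne_zero _).hasFDerivAt.comp_hasDerivAt t hline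

theorem fderiv_det_one_apply (A : E →L[ℝ] E) :
    fderiv ℝ (fun C : E →L[ℝ] E => C.det) 1 A = LinearMap.trace ℝ E A := by
  simpa using (hasDerivAt_det_add_smul 1 A 0).unique (hasDerivAt_det_one_add_smul A)

end ContinuousLinearMap

section

variable {E : Type*} [NormedAddCommGroup E] [NormedSpace ℝ E] [FiniteDimensional ℝ E]

theorem measureReal_image_add_smul [MeasurableSpace E] [BorelSpace E] (μ : Measure E)
    [μ.IsAddHaarMeasure] {s : Set E} (hs : MeasurableSet s) {η : E → E}
    (hη : Differentiable ℝ η) {K : ℝ≥0} (hK : LipschitzWith K η) {t : ℝ} (ht : ‖t‖₊ * K < 1) :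
    μ.real ((fun x => x + t • η x) '' s) = ∫ x in s, |(1 + t • fderiv ℝ η x).det| ∂μ := by
  have hinj : Function.Injective fun x => x + t • η x :=
    (AntilipschitzWith.id.add_lipschitzWith ((lipschitzWith_smul t).comp hK)
      (by simpa using ht)).injective
  have hderiv : ∀ x ∈ s, HasFDerivWithinAt (fun x => x + t • η x) (1 + t • fderiv ℝ η x) s x :=
    fun x _ => ((hasFDerivAt_id x).add ((hη x).hasFDerivAt.const_smul t)).hasFDerivWithinAt
  simpa using integral_image_eq_integral_abs_det_fderiv_smul μ hs hderiv hinj.injOn fun _ => (1 : ℝ)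

open ContinuousLinearMap in
theorem hasDerivAt_integral_abs_det_one_add_smul {X : Type*} [MeasurableSpace X]
    {μ : Measure X} [IsFiniteMeasure μ] {A : X → E →L[ℝ] E} (hA : AEStronglyMeasurable A μ)
    {M : ℝ} (hM : ∀ x, ‖A x‖ ≤ M) :
    HasDerivAt (fun t : ℝ => ∫ x, |(1 + t • A x).det| ∂μ)
      (∫ x, LinearMap.trace ℝ E (A x) ∂μ) 0 := by
  set D := fderiv ℝ fun B : E →L[ℝ] E => B.det
  -- Near `1` the determinant is positive, so `|det| = det`, and its derivative is bounded,
  -- which gives the dominating function.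
  obtain ⟨ε, hε, hnear⟩ : ∃ ε > 0, ∀ {B : E →L[ℝ] E}, dist B 1 < ε →
      0 < B.det ∧ ‖D B‖ < ‖D 1‖ + 1 := by
    refine Metric.eventually_nhds_iff.1 (Eventually.and ?_ ?_)
    · exact continuous_det.continuousAt.eventually (lt_mem_nhds (by simp [det]))
    · exact ((contDiff_det (n := 1)).continuous_fderiv one_ne_zero).norm.continuousAt.eventually
        (gt_mem_nhds (lt_add_one _))
  set s := {t : ℝ | ∀ x, dist (1 + t • A x) 1 < ε}
  have hs : s ∈ 𝓝 0 := by
    have hlim : ∀ᶠ t : ℝ in 𝓝 0, ‖t‖ * (|M| + 1) < ε :=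
      (show Continuous fun t : ℝ => ‖t‖ * (|M| + 1) by fun_prop).continuousAt.eventually
        (gt_mem_nhds (by simpa using hε))
    filter_upwards [hlim] with t ht x
    rw [dist_eq_norm, add_sub_cancel_left, norm_smul]
    exact lt_of_le_of_lt (by gcongr; exact (hM x).trans ((le_abs_self M).trans (by linarith))) ht
  have hderiv := hasDerivAt_integral_of_dominated_loc_of_deriv_le (μ := μ)
    (F := fun t x => (1 + t • A x).det) (F' := fun t x => D (1 + t • A x) (A x))
    (bound := fun _ => (‖D 1‖ + 1) * M) hs
    (Eventually.of_forall fun t =>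
      continuous_det.comp_aestronglyMeasurable (aestronglyMeasurable_const.add (hA.const_smul t)))
    (by simp) (by simpa using (D 1).continuous.comp_aestronglyMeasurable hA)
    (ae_of_all _ fun x t ht =>
      (le_opNorm _ _).trans (mul_le_mul (hnear (ht x)).2.le (hM x) (norm_nonneg _) (by positivity)))
    (integrable_const _) (ae_of_all _ fun x t _ => hasDerivAt_det_add_smul 1 (A x) t)
  simp only [zero_smul, add_zero, D, fderiv_det_one_apply] at hderiv
  refine hderiv.2.congr_of_eventuallyEq ?_
  filter_upwards [hs] with t ht
  exact integral_congr_ae (ae_of_all _ fun x => abs_of_pos (hnear (ht x)).1)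

end

theorem stmt_0 {d : ℕ} (Ω : Set (EuclideanSpace ℝ (Fin d))) (hΩ : IsOpen Ω)
    (hvol : volume Ω < ⊤)
    (η : EuclideanSpace ℝ (Fin d) → EuclideanSpace ℝ (Fin d))
    (hη : ContDiff ℝ (⊤ : ℕ∞) η) (hηc : HasCompactSupport η) :
    HasDerivAt (fun t : ℝ => (volume ((fun x => x + t • η x) '' Ω)).toReal)
      (∫ x in Ω, vdiv η x) 0 := by
  have hDη : Continuous (fderiv ℝ η) := hη.continuous_fderiv (by simp)
  obtain ⟨M, hM⟩ := (hηc.fderiv (𝕜 := ℝ)).exists_bound_of_continuous hDη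
  have hlip : LipschitzWith M.toNNReal η :=
    lipschitzWith_of_nnnorm_fderiv_le (hη.differentiable (by simp)) fun x =>
      (hM x).trans M.le_coe_toNNReal
  have hsmall : ∀ᶠ t : ℝ in 𝓝 0, ‖t‖₊ * M.toNNReal < 1 :=
    (show Continuous fun t : ℝ => ‖t‖₊ * M.toNNReal by fun_prop).continuousAt.eventually
      (gt_mem_nhds (by simp))
  have hvolume : ∀ᶠ t : ℝ in 𝓝 0, (volume ((fun x => x + t • η x) '' Ω)).toReal
      = ∫ x in Ω, |(1 + t • fderiv ℝ η x).det| := by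
    filter_upwards [hsmall] with t ht
    exact measureReal_image_add_smul volume hΩ.measurableSet (hη.differentiable (by simp)) hlip ht
  have : IsFiniteMeasure (volume.restrict Ω) := isFiniteMeasure_restrict.2 hvol.ne
  exact (hasDerivAt_integral_abs_det_one_add_smul hDη.aestronglyMeasurable hM).congr_of_eventuallyEq
    hvolume
end

section
/- Let Ω ⊆ ℝ^d be an open set of finite Lebesgue measure, let η, ξ ∈ C_c^∞(ℝ^d;ℝ^d), and set L := sup_x ‖Dη(x)‖ and M := sup_x ‖Dξ(x)‖ (operator norms). Then for every (t,s) ∈ ℝ² with |t|·L + |s|·M < 1 one has |(id + tη + sξ)(Ω)| = ∫_Ω det(I + t Dη(x) + s Dξ(x)) dx; in particular, on the set {(t,s) : |t|·L + |s|·M < 1} the function (t,s) ↦ |(id + tη + sξ)(Ω)| is a polynomial in (t,s) of degree at most d, hence C^∞. -/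
/-!
Write the map as `id + g` with `g = t • η + s • ξ`, so that `‖Dg‖ ≤ |t| L + |s| M < 1`. Then
`id + g` is injective since `g` is a contraction, and `det (1 + Dg) > 0` because the determinant
does not vanish on the connected ball `‖C‖ < 1` and equals `1` at its centre; the change of
variables formula therefore gives the volume with no absolute value. Expanding
`det (1 + t A + s B)` row by row writes the integrand as a polynomial of degree `≤ d` in `(t, s)`
whose coefficients are bounded continuous functions of `x`, so integrating over `Ω` (of finite
measure) coefficientwise gives a polynomial.
-/

open MeasureTheory Set

lemma Continuous.norm_le_iSup_norm_of_hasCompactSupport {X F : Type*} [TopologicalSpace X]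
    [NormedAddCommGroup F] {f : X → F} (hf : Continuous f) (hfc : HasCompactSupport f) (x : X) :
    ‖f x‖ ≤ ⨆ y, ‖f y‖ := by
  obtain ⟨C, hC⟩ := hf.bounded_above_of_compact_support hfc
  exact le_ciSup ⟨C, forall_mem_range.2 hC⟩ x

section Perturbation

variable {E : Type*} [NormedAddCommGroup E] [NormedSpace ℝ E]

theorem injective_id_add_of_norm_fderiv_le {g : E → E} (hg : Differentiable ℝ g) {K : ℝ}
    (hK : K < 1) (hg' : ∀ x, ‖fderiv ℝ g x‖ ≤ K) : Function.Injective fun x => x + g x := by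
  intro x y hxy
  have hlip := convex_univ.norm_image_sub_le_of_norm_fderiv_le (fun z _ => hg z)
    (fun z _ => hg' z) (mem_univ y) (mem_univ x)
  have hgxy : g x - g y = -(x - y) := by
    rw [neg_sub, sub_eq_sub_iff_add_eq_add, add_comm]
    exact hxy
  rw [hgxy, norm_neg] at hlip
  have : ‖x - y‖ = 0 := by nlinarith [norm_nonneg (x - y)]
  exact sub_eq_zero.1 (norm_eq_zero.1 this)

variable [FiniteDimensional ℝ E]

theorem ContinuousLinearMap.det_one_add_pos {C : E →L[ℝ] E} (hC : ‖C‖ < 1) :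
    0 < (1 + C).det := by
  have hne : ∀ D ∈ Metric.ball (0 : E →L[ℝ] E) 1, (1 + D).det ≠ 0 := by
    intro D hD
    rw [mem_ball_zero_iff, ← norm_neg] at hD
    have hunit : IsUnit (1 + D) := ⟨Units.oneSub (-D) hD, by simp [sub_neg_eq_add]⟩
    exact ((hunit.map ContinuousLinearMap.toLinearMapRingHom).map LinearMap.det).ne_zero
  have hconn : IsPreconnected ((fun D : E →L[ℝ] E => (1 + D).det) '' Metric.ball 0 1) :=
    (convex_ball 0 1).isPreconnected.image _
      (ContinuousLinearMap.continuous_det.comp (continuous_const.add continuous_id)).continuousOn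
  by_contra! hle
  obtain ⟨D, hD, hD0⟩ := hconn.Icc_subset (mem_image_of_mem _ (mem_ball_zero_iff.2 hC))
    ⟨0, Metric.mem_ball_self one_pos, by simp [ContinuousLinearMap.det]⟩ ⟨hle, zero_le_one⟩
  exact hne D hD hD0

variable [MeasurableSpace E] [BorelSpace E]

theorem measureReal_image_id_add_eq_integral_det (μ : Measure E) [μ.IsAddHaarMeasure]
    {s : Set E} (hs : MeasurableSet s) {g : E → E} (hg : Differentiable ℝ g) {K : ℝ}
    (hK : K < 1) (hg' : ∀ x, ‖fderiv ℝ g x‖ ≤ K) :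
    μ.real ((fun x => x + g x) '' s) = ∫ x in s, (1 + fderiv ℝ g x).det ∂μ := by
  have hf : ∀ x ∈ s, HasFDerivWithinAt (fun x => x + g x) (1 + fderiv ℝ g x) s x :=
    fun x _ => ((hasFDerivAt_id x).add (hg x).hasFDerivAt).hasFDerivWithinAt
  have hcov := integral_image_eq_integral_abs_det_fderiv_smul μ hs hf
    (injective_id_add_of_norm_fderiv_le hg hK hg').injOn fun _ => (1 : ℝ)
  rw [setIntegral_const, smul_eq_mul, mul_one] at hcov
  rw [hcov]
  refine setIntegral_congr_fun hs fun x _ => ?_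
  rw [smul_eq_mul, mul_one,
    abs_of_pos (ContinuousLinearMap.det_one_add_pos ((hg' x).trans_lt hK))]

end Perturbation

theorem Matrix.det_sum_smul {n ι R : Type*} [Fintype n] [DecidableEq n] [Fintype ι]
    [CommRing R] (c : ι → R) (A : ι → Matrix n n R) :
    (∑ k, c k • A k).det = ∑ r : n → ι, (∏ i, c (r i)) * (Matrix.of fun i => A (r i) i).det := by
  have hrows : (∑ k, c k • A k) = Matrix.of fun i => ∑ k, c k • A k i := by
    ext i j
    simp [Matrix.sum_apply]
  rw [hrows]
  change (Matrix.detRowAlternating (R := R) (n := n)).toMultilinearMap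
    (fun i => ∑ k, c k • A k i) = _
  rw [MultilinearMap.map_sum]
  refine Finset.sum_congr rfl fun r _ => ?_
  rw [MultilinearMap.map_smul_univ, smul_eq_mul]
  rfl

lemma Continuous.integrableOn_comp_of_mapsTo_isCompact {X Y : Type*} [TopologicalSpace X]
    [MeasurableSpace X] [OpensMeasurableSpace X] [TopologicalSpace Y] {φ : X → Y}
    (hφ : Continuous φ) {K : Set Y} (hK : IsCompact K) (hφK : ∀ x, φ x ∈ K) {G : Y → ℝ}
    (hG : Continuous G) {μ : Measure X} {S : Set X} (hS : μ S ≠ ⊤) :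
    IntegrableOn (fun x => G (φ x)) S μ := by
  obtain ⟨C, hC⟩ := hK.exists_bound_of_continuousOn hG.continuousOn
  exact Measure.integrableOn_of_bounded hS (hG.comp hφ).aestronglyMeasurable
    (ae_of_all _ fun x => hC _ (hφK x))

open MvPolynomial in
theorem exists_mvPolynomial_eval_eq_sum_prod {n : ℕ} (c : (Fin n → Fin 3) → ℝ) :
    ∃ P : MvPolynomial (Fin 2) ℝ, P.totalDegree ≤ n ∧
      ∀ t s : ℝ, eval ![t, s] P = ∑ r, c r * ∏ i, ![1, t, s] (r i) := by
  set v : Fin 3 → MvPolynomial (Fin 2) ℝ := ![1, X 0, X 1]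
  have hv : ∀ k, (v k).totalDegree ≤ 1 := by
    intro k; fin_cases k <;> simp [v, totalDegree_X]
  have hev : ∀ t s : ℝ, ∀ k, eval ![t, s] (v k) = ![1, t, s] k := by
    intro t s k; fin_cases k <;> simp [v]
  refine ⟨∑ r : Fin n → Fin 3, c r • ∏ i, v (r i), ?_, fun t s => ?_⟩
  · refine (totalDegree_finsetSum _ _).trans (Finset.sup_le fun r _ => ?_)
    refine (totalDegree_smul_le _ _).trans ((totalDegree_finsetProd _ _).trans ?_)
    simpa using Finset.sum_le_sum fun i (_ : i ∈ Finset.univ) => hv (r i)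
  · simp only [map_sum, smul_eval, map_prod, hev]

section Integration

variable {X : Type*} [TopologicalSpace X] [MeasurableSpace X] [OpensMeasurableSpace X]

theorem exists_mvPolynomial_integral_det_eq {n : ℕ} (μ : Measure X) {S : Set X} (hS : μ S ≠ ⊤)
    {A B : X → Matrix (Fin n) (Fin n) ℝ} (hA : Continuous A) (hAc : HasCompactSupport A)
    (hB : Continuous B) (hBc : HasCompactSupport B) :
    ∃ P : MvPolynomial (Fin 2) ℝ, P.totalDegree ≤ n ∧
      ∀ t s : ℝ, ∫ x in S, (1 + t • A x + s • B x).det ∂μ = MvPolynomial.eval ![t, s] P := by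
  set F : Fin 3 → Matrix (Fin n) (Fin n) ℝ × Matrix (Fin n) (Fin n) ℝ →
      Matrix (Fin n) (Fin n) ℝ := ![fun _ => 1, Prod.fst, Prod.snd]
  have hF : ∀ k, Continuous (F k) := by
    intro k
    fin_cases k
    · exact continuous_const
    · exact continuous_fst
    · exact continuous_snd
  set D : (Fin n → Fin 3) → Matrix (Fin n) (Fin n) ℝ × Matrix (Fin n) (Fin n) ℝ → ℝ :=
    fun r p => (Matrix.of fun i => F (r i) p i).det
  have hD : ∀ r, Continuous (D r) := fun r =>
    (continuous_matrix fun i j => (hF (r i)).matrix_elem i j).matrix_det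
  have hexpand : ∀ t s x, (1 + t • A x + s • B x).det =
      ∑ r, (∏ i, ![1, t, s] (r i)) * D r (A x, B x) := by
    intro t s x
    rw [← Matrix.det_sum_smul ![1, t, s] fun k => F k (A x, B x)]
    simp [Fin.sum_univ_three, F]
  have hint : ∀ r, IntegrableOn (fun x => D r (A x, B x)) S μ := fun r =>
    (hA.prodMk hB).integrableOn_comp_of_mapsTo_isCompact
      ((hAc.isCompact_range hA).prod (hBc.isCompact_range hB))
      (fun x => ⟨mem_range_self x, mem_range_self x⟩) (hD r) hS
  obtain ⟨P, hP, hPeval⟩ :=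
    exists_mvPolynomial_eval_eq_sum_prod fun r => ∫ x in S, D r (A x, B x) ∂μ
  refine ⟨P, hP, fun t s => ?_⟩
  simp_rw [hexpand]
  rw [integral_finsetSum _ fun r _ => (hint r).const_mul _, hPeval]
  simp_rw [integral_const_mul, mul_comm]

theorem exists_mvPolynomial_integral_linearMap_det_eq {E : Type*} [NormedAddCommGroup E]
    [NormedSpace ℝ E] [FiniteDimensional ℝ E] (μ : Measure X) {S : Set X} (hS : μ S ≠ ⊤)
    {a b : X → E →L[ℝ] E} (ha : Continuous a) (hac : HasCompactSupport a)
    (hb : Continuous b) (hbc : HasCompactSupport b) :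
    ∃ P : MvPolynomial (Fin 2) ℝ, P.totalDegree ≤ Module.finrank ℝ E ∧
      ∀ t s : ℝ, ∫ x in S, LinearMap.det
        (LinearMap.id + t • (a x : E →ₗ[ℝ] E) + s • (b x : E →ₗ[ℝ] E)) ∂μ =
          MvPolynomial.eval ![t, s] P := by
  set β := Module.finBasis ℝ E
  set m : (E →L[ℝ] E) →L[ℝ] Matrix (Fin (Module.finrank ℝ E)) (Fin (Module.finrank ℝ E)) ℝ :=
    LinearMap.toContinuousLinearMap
      ((LinearMap.toMatrix β β).toLinearMap ∘ₗ ContinuousLinearMap.coeLM ℝ)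
  obtain ⟨P, hP, hPeval⟩ := exists_mvPolynomial_integral_det_eq μ hS
    (m.continuous.comp ha) (hac.comp_left m.map_zero)
    (m.continuous.comp hb) (hbc.comp_left m.map_zero)
  refine ⟨P, hP, fun t s => ?_⟩
  rw [← hPeval]
  congr 1
  funext x
  rw [← LinearMap.det_toMatrix β]
  simp [m]

end Integration

theorem MvPolynomial.contDiff_eval_pair (P : MvPolynomial (Fin 2) ℝ) {n : WithTop ℕ∞} :
    ContDiff ℝ n fun p : ℝ × ℝ => eval ![p.1, p.2] P := by
  have h1 : ContDiff ℝ n fun x : Fin 2 → ℝ => eval x P :=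
    contDiffOn_univ.1 ((AnalyticOnNhd.eval_mvPolynomial P).contDiffOn uniqueDiffOn_univ)
  have h2 : ContDiff ℝ n fun p : ℝ × ℝ => ![p.1, p.2] := by
    refine contDiff_pi.2 fun i => ?_
    fin_cases i
    · exact contDiff_fst
    · exact contDiff_snd
  exact h1.comp h2

theorem stmt_2 {d : ℕ} (Ω : Set (EuclideanSpace ℝ (Fin d))) (hΩ : IsOpen Ω)
    (hvol : volume Ω < ⊤)
    (η ξ : EuclideanSpace ℝ (Fin d) → EuclideanSpace ℝ (Fin d))
    (hη : ContDiff ℝ (⊤ : ℕ∞) η) (hηc : HasCompactSupport η)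
    (hξ : ContDiff ℝ (⊤ : ℕ∞) ξ) (hξc : HasCompactSupport ξ)
    (L M : ℝ) (hL : L = ⨆ x : EuclideanSpace ℝ (Fin d), ‖fderiv ℝ η x‖)
    (hM : M = ⨆ x : EuclideanSpace ℝ (Fin d), ‖fderiv ℝ ξ x‖) :
    (∀ t s : ℝ, |t| * L + |s| * M < 1 →
      (volume ((fun x => x + t • η x + s • ξ x) '' Ω)).toReal =
        ∫ x in Ω, LinearMap.det
          ((LinearMap.id : EuclideanSpace ℝ (Fin d) →ₗ[ℝ] EuclideanSpace ℝ (Fin d))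
            + t • (fderiv ℝ η x).toLinearMap + s • (fderiv ℝ ξ x).toLinearMap)) ∧
    (∃ P : MvPolynomial (Fin 2) ℝ, P.totalDegree ≤ d ∧
      ∀ t s : ℝ, |t| * L + |s| * M < 1 →
        (volume ((fun x => x + t • η x + s • ξ x) '' Ω)).toReal =
          MvPolynomial.eval ![t, s] P) ∧
    ContDiffOn ℝ (⊤ : ℕ∞)
      (fun p : ℝ × ℝ =>
        (volume ((fun x => x + p.1 • η x + p.2 • ξ x) '' Ω)).toReal)
      {p : ℝ × ℝ | |p.1| * L + |p.2| * M < 1} := by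
  have hDη : Continuous (fderiv ℝ η) := hη.continuous_fderiv (by simp)
  have hDξ : Continuous (fderiv ℝ ξ) := hξ.continuous_fderiv (by simp)
  have hLη : ∀ x, ‖fderiv ℝ η x‖ ≤ L :=
    hL ▸ hDη.norm_le_iSup_norm_of_hasCompactSupport (hηc.fderiv (𝕜 := ℝ))
  have hMξ : ∀ x, ‖fderiv ℝ ξ x‖ ≤ M :=
    hM ▸ hDξ.norm_le_iSup_norm_of_hasCompactSupport (hξc.fderiv (𝕜 := ℝ))
  have hvolume : ∀ t s : ℝ, |t| * L + |s| * M < 1 →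
      (volume ((fun x => x + t • η x + s • ξ x) '' Ω)).toReal =
        ∫ x in Ω, LinearMap.det
          ((LinearMap.id : EuclideanSpace ℝ (Fin d) →ₗ[ℝ] EuclideanSpace ℝ (Fin d))
            + t • (fderiv ℝ η x).toLinearMap + s • (fderiv ℝ ξ x).toLinearMap) := by
    intro t s hts
    have hg : ∀ x, HasFDerivAt (fun y => t • η y + s • ξ y)
        (t • fderiv ℝ η x + s • fderiv ℝ ξ x) x := fun x =>
      ((hη.differentiable (by simp) x).hasFDerivAt.const_smul t).add
        ((hξ.differentiable (by simp) x).hasFDerivAt.const_smul s)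
    have hbound : ∀ x, ‖fderiv ℝ (fun y => t • η y + s • ξ y) x‖ ≤ |t| * L + |s| * M := by
      intro x
      rw [(hg x).fderiv]
      calc _ ≤ ‖t • fderiv ℝ η x‖ + ‖s • fderiv ℝ ξ x‖ := norm_add_le _ _
        _ ≤ |t| * L + |s| * M := by
          rw [norm_smul, norm_smul, Real.norm_eq_abs, Real.norm_eq_abs]
          gcongr
          exacts [hLη x, hMξ x]
    simp_rw [add_assoc]
    rw [← measureReal_def, measureReal_image_id_add_eq_integral_det volume hΩ.measurableSet
      (fun x => (hg x).differentiableAt) hts hbound]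
    simp [(hg _).fderiv, ContinuousLinearMap.det, Module.End.one_eq_id]
  obtain ⟨P, hPdeg, hP⟩ := exists_mvPolynomial_integral_linearMap_det_eq volume hvol.ne hDη
    (hηc.fderiv (𝕜 := ℝ)) hDξ (hξc.fderiv (𝕜 := ℝ))
  rw [finrank_euclideanSpace_fin] at hPdeg
  have hpoly : ∀ t s : ℝ, |t| * L + |s| * M < 1 →
      (volume ((fun x => x + t • η x + s • ξ x) '' Ω)).toReal = MvPolynomial.eval ![t, s] P :=
    fun t s hts => (hvolume t s hts).trans (hP t s)
  exact ⟨hvolume, ⟨P, hPdeg, hpoly⟩,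
    (MvPolynomial.contDiff_eval_pair P).contDiffOn.congr fun p hp => hpoly p.1 p.2 hp⟩
end

section
/- Let Ω ⊆ ℝ^d be an open set of finite Lebesgue measure and let η, ξ ∈ C_c^∞(ℝ^d;ℝ^d) have disjoint supports, i.e. supp η ∩ supp ξ = ∅. Set L := sup_x ‖Dη(x)‖ and M := sup_x ‖Dξ(x)‖. Then for all (t,s) ∈ ℝ² with |t|·L + |s|·M < 1 one has |(id + tη + sξ)(Ω)| − |Ω| = ( |(id + tη)(Ω)| − |Ω| ) + ( |(id + sξ)(Ω)| − |Ω| ); in particular the mixed second partial derivative ∂²/∂t∂s of (t,s) ↦ |(id + tη + sξ)(Ω)| at (0,0) equals 0. -/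
/-!
For `‖Dg‖ ≤ K < 1` the map `id + g` is injective, so the change of variables formula gives
`|(id + g)(Ω)| - |Ω| = ∫_Ω (|det (I + Dg)| - 1)`. Near a point outside `supp ξ` the field
`tη + sξ` coincides with `tη`, and symmetrically, so when the supports are disjoint the integrand
for `tη + sξ` is the sum of the integrands for `tη` and for `sξ`. Hence near `(0, 0)` the volume
is a function of `t` plus a function of `s`, and its mixed derivative vanishes.
-/

open Filter Function Topology MeasureTheory ENNReal

section

variable {E F : Type*} [NormedAddCommGroup E] [NormedSpace ℝ E]
  [NormedAddCommGroup F] [NormedSpace ℝ F]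

theorem norm_fderiv_le_iSup_norm_fderiv {f : E → F} (hf : ContDiff ℝ 1 f)
    (hfc : HasCompactSupport f) (x : E) : ‖fderiv ℝ f x‖ ≤ ⨆ y, ‖fderiv ℝ f y‖ :=
  le_ciSup ((hf.continuous_fderiv one_ne_zero).norm.bddAbove_range_of_hasCompactSupport
    (hfc.fderiv ℝ).norm) x

theorem norm_fderiv_const_smul_le {f : E → F} (hf : Differentiable ℝ f) {A : ℝ}
    (hA : ∀ x, ‖fderiv ℝ f x‖ ≤ A) (a : ℝ) (x : E) : ‖fderiv ℝ (a • f) x‖ ≤ |a| * A := by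
  rw [fderiv_const_smul (hf x), norm_smul, Real.norm_eq_abs]
  exact mul_le_mul_of_nonneg_left (hA x) (abs_nonneg a)

theorem injective_add_of_norm_fderiv_le {g : E → E} {K : ℝ} (hg : Differentiable ℝ g)
    (hbound : ∀ x, ‖fderiv ℝ g x‖ ≤ K) (hK : K < 1) : Injective fun x => x + g x := by
  have hlip : LipschitzWith K.toNNReal g :=
    lipschitzWith_of_nnnorm_fderiv_le hg fun x => by
      simpa [← NNReal.coe_le_coe] using (hbound x).trans (le_max_left K 0)
  refine (AntilipschitzWith.id.add_lipschitzWith hlip ?_).injective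
  simpa using hK

noncomputable def jacobianExcess (g : E → E) (x : E) : ℝ :=
  |(ContinuousLinearMap.id ℝ E + fderiv ℝ g x).det| - 1

theorem jacobianExcess_add_of_notMem_tsupport {f g : E → E} {x : E} (hx : x ∉ tsupport g) :
    jacobianExcess (f + g) x = jacobianExcess f x := by
  have hfg : f + g =ᶠ[𝓝 x] f := by
    filter_upwards [notMem_tsupport_iff_eventuallyEq.mp hx] with y hy
    simp [hy]
  rw [jacobianExcess, jacobianExcess, hfg.fderiv_eq]

theorem jacobianExcess_of_notMem_tsupport {g : E → E} {x : E} (hx : x ∉ tsupport g) :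
    jacobianExcess g x = 0 := by
  simpa [jacobianExcess, ContinuousLinearMap.det] using
    jacobianExcess_add_of_notMem_tsupport (f := 0) hx

theorem jacobianExcess_add {f g : E → E} (h : Disjoint (tsupport f) (tsupport g)) :
    jacobianExcess (f + g) = jacobianExcess f + jacobianExcess g := by
  ext x
  by_cases hx : x ∈ tsupport f
  · have hx' : x ∉ tsupport g := h.notMem_of_mem_left hx
    rw [Pi.add_apply, jacobianExcess_add_of_notMem_tsupport hx',
      jacobianExcess_of_notMem_tsupport hx', add_zero]
  · rw [Pi.add_apply, add_comm f, jacobianExcess_add_of_notMem_tsupport hx,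
      jacobianExcess_of_notMem_tsupport hx, zero_add]

theorem continuous_jacobianExcess {g : E → E} (hg : ContDiff ℝ 1 g) :
    Continuous (jacobianExcess g) :=
  ((ContinuousLinearMap.continuous_det.comp
    (continuous_const.add (hg.continuous_fderiv one_ne_zero))).abs).sub continuous_const

theorem HasCompactSupport.jacobianExcess {g : E → E} (hg : HasCompactSupport g) :
    HasCompactSupport (jacobianExcess g) :=
  hg.mono' fun _ hx => by_contra fun h => hx (jacobianExcess_of_notMem_tsupport h)

variable [MeasurableSpace E] [BorelSpace E] (μ : Measure E)

theorem integrable_jacobianExcess [IsFiniteMeasureOnCompacts μ] {g : E → E}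
    (hg : ContDiff ℝ 1 g) (hgc : HasCompactSupport g) : Integrable (jacobianExcess g) μ :=
  (continuous_jacobianExcess hg).integrable_of_hasCompactSupport hgc.jacobianExcess

variable [FiniteDimensional ℝ E] [μ.IsAddHaarMeasure]

theorem addHaar_image_add_eq_lintegral {g : E → E} {K : ℝ} (hg : Differentiable ℝ g)
    (hbound : ∀ x, ‖fderiv ℝ g x‖ ≤ K) (hK : K < 1) {s : Set E} (hs : MeasurableSet s) :
    μ ((fun x => x + g x) '' s) =
      ∫⁻ x in s, ENNReal.ofReal |(ContinuousLinearMap.id ℝ E + fderiv ℝ g x).det| ∂μ :=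
  (lintegral_abs_det_fderiv_eq_addHaar_image μ hs
    (fun x _ => ((hasFDerivAt_id x).add (hg x).hasFDerivAt).hasFDerivWithinAt)
    (injective_add_of_norm_fderiv_le hg hbound hK).injOn).symm

theorem toReal_addHaar_image_add_sub {g : E → E} {K : ℝ} (hg : ContDiff ℝ 1 g)
    (hgc : HasCompactSupport g) (hbound : ∀ x, ‖fderiv ℝ g x‖ ≤ K) (hK : K < 1) {s : Set E}
    (hs : MeasurableSet s) (hμs : μ s ≠ ∞) :
    (μ ((fun x => x + g x) '' s)).toReal - (μ s).toReal = ∫ x in s, jacobianExcess g x ∂μ := by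
  have habs : IntegrableOn (fun x => |(ContinuousLinearMap.id ℝ E + fderiv ℝ g x).det|) s μ :=
    ((integrable_jacobianExcess μ hg hgc).integrableOn.add
      (integrableOn_const (C := (1 : ℝ)) hμs)).congr_fun
      (fun x _ => by simp [jacobianExcess]) hs
  rw [addHaar_image_add_eq_lintegral μ (hg.differentiable one_ne_zero) hbound hK hs,
    ← integral_eq_lintegral_of_nonneg_ae (ae_of_all _ fun _ => abs_nonneg _)
      habs.aestronglyMeasurable]
  simp only [jacobianExcess]
  rw [integral_sub habs (integrableOn_const (C := (1 : ℝ)) hμs), setIntegral_const,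
    smul_eq_mul, mul_one, measureReal_def]

theorem toReal_addHaar_image_add_add_sub {f g : E → E} {A B : ℝ} (hf : ContDiff ℝ 1 f)
    (hg : ContDiff ℝ 1 g) (hfc : HasCompactSupport f) (hgc : HasCompactSupport g)
    (hfg : Disjoint (tsupport f) (tsupport g)) (hA : ∀ x, ‖fderiv ℝ f x‖ ≤ A)
    (hB : ∀ x, ‖fderiv ℝ g x‖ ≤ B) (hAB : A + B < 1) {s : Set E} (hs : MeasurableSet s)
    (hμs : μ s ≠ ∞) :
    (μ ((fun x => x + f x + g x) '' s)).toReal - (μ s).toReal =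
      ((μ ((fun x => x + f x) '' s)).toReal - (μ s).toReal) +
        ((μ ((fun x => x + g x) '' s)).toReal - (μ s).toReal) := by
  have hf' := hf.differentiable one_ne_zero
  have hg' := hg.differentiable one_ne_zero
  have hA0 : 0 ≤ A := (norm_nonneg _).trans (hA 0)
  have hB0 : 0 ≤ B := (norm_nonneg _).trans (hB 0)
  have hAB' : ∀ x, ‖fderiv ℝ (f + g) x‖ ≤ A + B := fun x => by
    rw [fderiv_add (hf' x) (hg' x)]
    exact (norm_add_le _ _).trans (add_le_add (hA x) (hB x))
  rw [show (fun x => x + f x + g x) = fun x => x + (f + g) x from funext fun x => add_assoc _ _ _,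
    toReal_addHaar_image_add_sub μ (g := f + g) (hf.add hg) (hfc.add hgc) hAB' hAB hs hμs,
    toReal_addHaar_image_add_sub μ hf hfc hA (by linarith) hs hμs,
    toReal_addHaar_image_add_sub μ hg hgc hB (by linarith) hs hμs, jacobianExcess_add hfg]
  exact integral_add (integrable_jacobianExcess μ hf hfc).integrableOn
    (integrable_jacobianExcess μ hg hgc).integrableOn

end

theorem deriv_deriv_eq_zero_of_eventually_eq_add {𝕜 F : Type*} [NontriviallyNormedField 𝕜]
    [NormedAddCommGroup F] [NormedSpace 𝕜 F] {Φ : 𝕜 → 𝕜 → F} {a b : 𝕜 → F} {t₀ s₀ : 𝕜}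
    (h : ∀ᶠ t in 𝓝 t₀, ∀ᶠ s in 𝓝 s₀, Φ t s = a t + b s) :
    deriv (fun t => deriv (Φ t) s₀) t₀ = 0 := by
  have hconst : (fun t => deriv (Φ t) s₀) =ᶠ[𝓝 t₀] fun _ => deriv b s₀ := by
    filter_upwards [h] with t ht
    rw [EventuallyEq.deriv_eq ht, deriv_const_add]
  rw [hconst.deriv_eq, deriv_const]

theorem stmt_6 {d : ℕ} (Ω : Set (EuclideanSpace ℝ (Fin d))) (hΩ : IsOpen Ω)
    (hvol : volume Ω < ⊤)
    (η ξ : EuclideanSpace ℝ (Fin d) → EuclideanSpace ℝ (Fin d))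
    (hη : ContDiff ℝ (⊤ : ℕ∞) η) (hηc : HasCompactSupport η)
    (hξ : ContDiff ℝ (⊤ : ℕ∞) ξ) (hξc : HasCompactSupport ξ)
    (hdisj : Disjoint (tsupport η) (tsupport ξ))
    (L M : ℝ) (hL : L = ⨆ x : EuclideanSpace ℝ (Fin d), ‖fderiv ℝ η x‖)
    (hM : M = ⨆ x : EuclideanSpace ℝ (Fin d), ‖fderiv ℝ ξ x‖) :
    (∀ t s : ℝ, |t| * L + |s| * M < 1 →
      (volume ((fun x => x + t • η x + s • ξ x) '' Ω)).toReal - (volume Ω).toReal =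
        ((volume ((fun x => x + t • η x) '' Ω)).toReal - (volume Ω).toReal) +
        ((volume ((fun x => x + s • ξ x) '' Ω)).toReal - (volume Ω).toReal)) ∧
    deriv (fun t : ℝ =>
        deriv (fun s : ℝ =>
          (volume ((fun x => x + t • η x + s • ξ x) '' Ω)).toReal) 0) 0 = 0 := by
  have hη1 : ContDiff ℝ 1 η := hη.of_le (by simp)
  have hξ1 : ContDiff ℝ 1 ξ := hξ.of_le (by simp)
  have hLη := norm_fderiv_const_smul_le (hη1.differentiable one_ne_zero)
    (hL ▸ norm_fderiv_le_iSup_norm_fderiv hη1 hηc)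
  have hMξ := norm_fderiv_const_smul_le (hξ1.differentiable one_ne_zero)
    (hM ▸ norm_fderiv_le_iSup_norm_fderiv hξ1 hξc)
  have hsplit : ∀ t s : ℝ, |t| * L + |s| * M < 1 →
      (volume ((fun x => x + t • η x + s • ξ x) '' Ω)).toReal - (volume Ω).toReal =
        ((volume ((fun x => x + t • η x) '' Ω)).toReal - (volume Ω).toReal) +
        ((volume ((fun x => x + s • ξ x) '' Ω)).toReal - (volume Ω).toReal) := fun t s hts =>
    toReal_addHaar_image_add_add_sub volume (hη1.const_smul t) (hξ1.const_smul s)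
      (hηc.mono (support_const_smul_subset t η)) (hξc.mono (support_const_smul_subset s ξ))
      (hdisj.mono (closure_mono (support_const_smul_subset t η))
        (closure_mono (support_const_smul_subset s ξ)))
      (hLη t) (hMξ s) hts hΩ.measurableSet hvol.ne
  refine ⟨hsplit, deriv_deriv_eq_zero_of_eventually_eq_add
    (a := fun t => (volume ((fun x => x + t • η x) '' Ω)).toReal - (volume Ω).toReal)
    (b := fun s => (volume ((fun x => x + s • ξ x) '' Ω)).toReal) ?_⟩
  have ht : ∀ᶠ t in 𝓝 (0 : ℝ), |t| * L < 1 :=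
    (continuous_abs.mul continuous_const).continuousAt.eventually_lt continuousAt_const (by simp)
  filter_upwards [ht] with t ht
  have hs : ∀ᶠ s in 𝓝 (0 : ℝ), |t| * L + |s| * M < 1 :=
    (continuous_const.add (continuous_abs.mul continuous_const)).continuousAt.eventually_lt
      continuousAt_const (by simpa using ht)
  filter_upwards [hs] with s hs
  linarith [hsplit t s hs]
end

section
/- (Volume-preserving variations.) Let D ⊆ ℝ^d be a bounded open set, Ω ⊆ D an open set, and η, ξ ∈ C_c^∞(D;ℝ^d) smooth vector fields compactly supported in D with supp η ∩ supp ξ = ∅ and ∫_Ω div ξ(x) dx ≠ 0. Then there exist t₀ > 0 and a C^∞ function f : (−t₀,t₀) → ℝ with f(0) = 0 such that the map Φ_t(x) := x + tη(x) + f(t)ξ(x) preserves the volume of Ω for every t ∈ (−t₀,t₀), that is |Φ_t(Ω)| = |Ω| for all |t| < t₀; moreover f'(0) · ∫_Ω div ξ(x) dx = − ∫_Ω div η(x) dx. -/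
/-!
Write `Φ_{t,s}(x) = x + t η(x) + s ξ(x)`. Since `η` and `ξ` have disjoint supports, the Jacobian
`det DΦ_{t,s}` equals `det (1 + t Dη)` on `supp η`, `det (1 + s Dξ)` on `supp ξ` and `1` elsewhere.
For small `t, s` the map `Φ_{t,s}` is injective (a Lipschitz-small perturbation of the identity)
with positive Jacobian, so the change of variables formula gives
`|Φ_{t,s}(Ω)| = P(t) + Q(s) - |Ω|`, where `P(t) = ∫_Ω det (1 + t Dη)` and
`Q(s) = ∫_Ω det (1 + s Dξ)` are polynomials with `P(0) = Q(0) = |Ω|`, `P'(0) = ∫_Ω div η` and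
`Q'(0) = ∫_Ω div ξ ≠ 0`. The inverse function theorem for `Q` then solves
`Q(f(t)) = 2|Ω| - P(t)` with `f(0) = 0` and `f` smooth (even analytic), and differentiating at `0`
gives `f'(0) Q'(0) = -P'(0)`.
-/

open MeasureTheory

open Polynomial Filter Topology
open scoped ENNReal NNReal

namespace Matrix

variable {n R : Type*} [Fintype n] [DecidableEq n] [CommRing R]

lemma eval_det_one_add_X_smul (M : Matrix n n R) (t : R) :
    (det (1 + (X : R[X]) • M.map C)).eval t = det (1 + t • M) := by
  rw [← coe_evalRingHom, RingHom.map_det]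
  congr 1
  ext i j
  simp [Matrix.one_apply, apply_ite]
  exact mul_comm _ _

lemma natDegree_det_one_add_X_smul_le (M : Matrix n n R) :
    (det (1 + (X : R[X]) • M.map C)).natDegree ≤ Fintype.card n := by
  refine natDegree_le_iff_coeff_eq_zero.2 fun k hk => ?_
  rw [coeff_det_one_add_X_smul_eq_sum_minors, Finset.powersetCard_eq_empty.2 hk,
    Finset.sum_empty]

lemma continuous_coeff_det_one_add_X_smul [TopologicalSpace R] [IsTopologicalRing R] (k : ℕ) :
    Continuous fun M : Matrix n n R => (det (1 + (X : R[X]) • M.map C)).coeff k := by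
  simp_rw [coeff_det_one_add_X_smul_eq_sum_minors]
  exact continuous_finsetSum _ fun s _ => (continuous_id.matrix_submatrix _ _).matrix_det

end Matrix

namespace ContinuousLinearMap

variable {E : Type*} [NormedAddCommGroup E] [NormedSpace ℝ E]

lemma det_one_add_add_of_eq_zero_or_eq_zero {a b : E →L[ℝ] E} (h : a = 0 ∨ b = 0) :
    (1 + a + b).det = (1 + a).det + (1 + b).det - 1 := by
  rcases h with rfl | rfl <;> simp [ContinuousLinearMap.det]

lemma _root_.IsCompact.eventually_forall_det_one_add_smul_pos {K : Set (E →L[ℝ] E)}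
    (hK : IsCompact K) : ∀ᶠ t in 𝓝 (0 : ℝ), ∀ L ∈ K, 0 < (1 + t • L).det := by
  refine hK.eventually_forall_of_forall_eventually fun L _ => ?_
  have hcont : Continuous fun p : ℝ × (E →L[ℝ] E) => (1 + p.1 • p.2).det :=
    continuous_det.comp (continuous_const.add (continuous_fst.smul continuous_snd))
  exact continuousAt_const.eventually_lt hcont.continuousAt (by simp [ContinuousLinearMap.det])

variable [FiniteDimensional ℝ E]

noncomputable def detOneAddSmulPoly (L : E →L[ℝ] E) : ℝ[X] :=
  let b := Module.finBasis ℝ E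
  Matrix.det (1 + (X : ℝ[X]) • (LinearMap.toMatrix b b L).map C)

lemma eval_detOneAddSmulPoly (L : E →L[ℝ] E) (t : ℝ) :
    L.detOneAddSmulPoly.eval t = (1 + t • L).det := by
  rw [detOneAddSmulPoly, Matrix.eval_det_one_add_X_smul, ContinuousLinearMap.det,
    ← LinearMap.det_toMatrix (Module.finBasis ℝ E)]
  simp

lemma natDegree_detOneAddSmulPoly_le (L : E →L[ℝ] E) :
    L.detOneAddSmulPoly.natDegree ≤ Module.finrank ℝ E :=
  (Matrix.natDegree_det_one_add_X_smul_le _).trans_eq (Fintype.card_fin _)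

lemma coeff_zero_detOneAddSmulPoly (L : E →L[ℝ] E) : L.detOneAddSmulPoly.coeff 0 = 1 := by
  rw [detOneAddSmulPoly, coeff_zero_eq_eval_zero, Matrix.eval_det_one_add_X_smul, zero_smul,
    add_zero, Matrix.det_one]

lemma coeff_one_detOneAddSmulPoly (L : E →L[ℝ] E) :
    L.detOneAddSmulPoly.coeff 1 = LinearMap.trace ℝ E L := by
  rw [detOneAddSmulPoly, Matrix.coeff_det_one_add_X_smul_one,
    LinearMap.trace_eq_matrix_trace ℝ (Module.finBasis ℝ E)]

lemma continuous_coeff_detOneAddSmulPoly (k : ℕ) :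
    Continuous fun L : E →L[ℝ] E => L.detOneAddSmulPoly.coeff k :=
  let toMatrixLM : (E →L[ℝ] E) →ₗ[ℝ] Matrix _ _ ℝ :=
    (LinearMap.toMatrix (Module.finBasis ℝ E) (Module.finBasis ℝ E)).toLinearMap ∘ₗ coeLM ℝ
  (Matrix.continuous_coeff_det_one_add_X_smul k).comp toMatrixLM.continuous_of_finiteDimensional

end ContinuousLinearMap

section Integrals

variable {α : Type*} [MeasurableSpace α] {μ : Measure α}

lemma Polynomial.exists_coeff_eq_integral_coeff_and_eval_eq_integral_eval {p : α → ℝ[X]} {N : ℕ}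
    (hdeg : ∀ x, (p x).natDegree ≤ N) (hint : ∀ k, Integrable (fun x => (p x).coeff k) μ) :
    ∃ P : ℝ[X], (∀ k, P.coeff k = ∫ x, (p x).coeff k ∂μ) ∧
      ∀ t, P.eval t = ∫ x, (p x).eval t ∂μ := by
  refine ⟨∑ k ∈ Finset.range (N + 1), monomial k (∫ x, (p x).coeff k ∂μ), fun k => ?_, fun t => ?_⟩
  · rw [finsetSum_coeff]
    simp only [coeff_monomial, Finset.sum_ite_eq', Finset.mem_range]
    split_ifs with hk
    · rfl
    · have hzero : ∀ x, (p x).coeff k = 0 := fun x =>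
        coeff_eq_zero_of_natDegree_lt ((hdeg x).trans_lt (by omega))
      simp [hzero]
  · simp_rw [eval_finsetSum, eval_monomial, eval_eq_sum_range' (Nat.lt_succ_of_le (hdeg _)) t]
    rw [integral_finsetSum _ fun k _ => (hint k).mul_const _]
    simp_rw [integral_mul_const]

variable [TopologicalSpace α] [OpensMeasurableSpace α]

lemma integrableOn_comp_of_isCompact_range {F : Type*} [TopologicalSpace F] {A : α → F}
    {g : F → ℝ} (hg : Continuous g) (hA : Continuous A) (hK : IsCompact (Set.range A))
    {Ω : Set α} (hΩ : μ Ω ≠ ∞) : IntegrableOn (fun x => g (A x)) Ω μ := by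
  obtain ⟨B, hB⟩ := hK.exists_bound_of_continuousOn hg.continuousOn
  exact Measure.integrableOn_of_bounded hΩ (hg.comp hA).aestronglyMeasurable
    (Eventually.of_forall fun x => hB _ (Set.mem_range_self x))

variable {E : Type*} [NormedAddCommGroup E] [NormedSpace ℝ E] [FiniteDimensional ℝ E]

lemma exists_polynomial_eval_eq_setIntegral_det {A : α → E →L[ℝ] E} (hA : Continuous A)
    (hAc : HasCompactSupport A) {Ω : Set α} (hΩ : μ Ω ≠ ∞) :
    ∃ P : ℝ[X], P.coeff 0 = μ.real Ω ∧ P.coeff 1 = ∫ x in Ω, LinearMap.trace ℝ E (A x) ∂μ ∧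
      ∀ t, P.eval t = ∫ x in Ω, (1 + t • A x).det ∂μ := by
  obtain ⟨P, hPcoeff, hPeval⟩ :=
    Polynomial.exists_coeff_eq_integral_coeff_and_eval_eq_integral_eval (μ := μ.restrict Ω)
      (p := fun x => (A x).detOneAddSmulPoly)
      (fun x => (A x).natDegree_detOneAddSmulPoly_le)
      (fun k => integrableOn_comp_of_isCompact_range
        (ContinuousLinearMap.continuous_coeff_detOneAddSmulPoly k) hA (hAc.isCompact_range hA) hΩ)
  refine ⟨P, ?_, ?_, fun t => ?_⟩
  · simp [hPcoeff, ContinuousLinearMap.coeff_zero_detOneAddSmulPoly]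
  · simp [hPcoeff, ContinuousLinearMap.coeff_one_detOneAddSmulPoly]
  · simp [hPeval, ContinuousLinearMap.eval_detOneAddSmulPoly]

end Integrals

lemma injective_add_of_lipschitzWith {E : Type*} [NormedAddCommGroup E] {g : E → E} {K : ℝ≥0}
    (hg : LipschitzWith K g) (hK : K < 1) : Function.Injective fun x => x + g x :=
  (AntilipschitzWith.id.add_lipschitzWith hg (by simpa using hK)).injective

section VolumeOfImage

variable {E : Type*} [NormedAddCommGroup E] [NormedSpace ℝ E]

lemma eventually_injective_add_smul_add_smul {η ξ : E → E} {Lη Lξ : ℝ≥0}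
    (hη : LipschitzWith Lη η) (hξ : LipschitzWith Lξ ξ) :
    ∀ᶠ p : ℝ × ℝ in 𝓝 0, Function.Injective fun x => x + p.1 • η x + p.2 • ξ x := by
  have hcont : Continuous fun p : ℝ × ℝ => ‖p.1‖₊ * Lη + ‖p.2‖₊ * Lξ := by fun_prop
  have hsmall : ∀ᶠ p : ℝ × ℝ in 𝓝 0, ‖p.1‖₊ * Lη + ‖p.2‖₊ * Lξ < 1 :=
    (hcont.tendsto 0).eventually_lt_const (by simp)
  filter_upwards [hsmall] with p hp
  simpa only [add_assoc, Function.comp_apply] using injective_add_of_lipschitzWith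
    (((lipschitzWith_smul p.1).comp hη).add ((lipschitzWith_smul p.2).comp hξ)) hp

lemma fderiv_eq_zero_or_fderiv_eq_zero {η ξ : E → E} (hdisj : Disjoint (tsupport η) (tsupport ξ))
    (x : E) : fderiv ℝ η x = 0 ∨ fderiv ℝ ξ x = 0 := by
  by_cases hx : x ∈ tsupport η
  · exact .inr (fderiv_of_notMem_tsupport ℝ (Set.disjoint_left.1 hdisj hx))
  · exact .inl (fderiv_of_notMem_tsupport ℝ hx)

variable [FiniteDimensional ℝ E] [MeasurableSpace E] [BorelSpace E] (μ : Measure E)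
  [μ.IsAddHaarMeasure]

lemma addHaar_image_eq_ofReal_integral_det {Ω : Set E} (hΩ : MeasurableSet Ω) {f : E → E}
    {f' : E → E →L[ℝ] E} (hf' : ∀ x ∈ Ω, HasFDerivWithinAt f (f' x) Ω x) (hf : Set.InjOn f Ω)
    (hpos : ∀ x ∈ Ω, 0 ≤ (f' x).det) (hint : IntegrableOn (fun x => (f' x).det) Ω μ) :
    μ (f '' Ω) = ENNReal.ofReal (∫ x in Ω, (f' x).det ∂μ) := by
  rw [← lintegral_abs_det_fderiv_eq_addHaar_image μ hΩ hf' hf,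
    ofReal_integral_eq_lintegral_ofReal hint ((ae_restrict_iff' hΩ).2 (ae_of_all _ hpos))]
  exact setLIntegral_congr_fun hΩ fun x hx => by rw [abs_of_nonneg (hpos x hx)]

theorem eventually_addHaar_image_add_smul_add_smul {Ω : Set E} (hΩm : MeasurableSet Ω)
    (hΩ : μ Ω ≠ ∞) {η ξ : E → E} (hη : ContDiff ℝ 1 η) (hηc : HasCompactSupport η)
    (hξ : ContDiff ℝ 1 ξ) (hξc : HasCompactSupport ξ)
    (hdisj : Disjoint (tsupport η) (tsupport ξ)) :
    ∀ᶠ p : ℝ × ℝ in 𝓝 0, μ ((fun x => x + p.1 • η x + p.2 • ξ x) '' Ω) =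
      ENNReal.ofReal ((∫ x in Ω, (1 + p.1 • fderiv ℝ η x).det ∂μ) +
        (∫ x in Ω, (1 + p.2 • fderiv ℝ ξ x).det ∂μ) - μ.real Ω) := by
  have hDη := hη.continuous_fderiv one_ne_zero
  have hDξ := hξ.continuous_fderiv one_ne_zero
  have hKη := (hηc.fderiv (𝕜 := ℝ)).isCompact_range hDη
  have hKξ := (hξc.fderiv (𝕜 := ℝ)).isCompact_range hDξ
  obtain ⟨Lη, hLη⟩ := hη.lipschitzWith_of_hasCompactSupport hηc one_ne_zero
  obtain ⟨Lξ, hLξ⟩ := hξ.lipschitzWith_of_hasCompactSupport hξc one_ne_zero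
  filter_upwards [eventually_injective_add_smul_add_smul hLη hLξ,
    (continuous_fst.tendsto 0).eventually hKη.eventually_forall_det_one_add_smul_pos,
    (continuous_snd.tendsto 0).eventually hKξ.eventually_forall_det_one_add_smul_pos]
    with p hinj hpη hpξ
  have hderiv : ∀ x, HasFDerivAt (fun x => x + p.1 • η x + p.2 • ξ x)
      (1 + p.1 • fderiv ℝ η x + p.2 • fderiv ℝ ξ x) x := fun x =>
    ((hasFDerivAt_id x).add ((hη.differentiable one_ne_zero x).hasFDerivAt.const_smul p.1)).add
      ((hξ.differentiable one_ne_zero x).hasFDerivAt.const_smul p.2)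
  have hdet : ∀ x, (1 + p.1 • fderiv ℝ η x + p.2 • fderiv ℝ ξ x).det =
      (1 + p.1 • fderiv ℝ η x).det + (1 + p.2 • fderiv ℝ ξ x).det - 1 := fun x =>
    ContinuousLinearMap.det_one_add_add_of_eq_zero_or_eq_zero
      ((fderiv_eq_zero_or_fderiv_eq_zero hdisj x).imp (fun h => by rw [h, smul_zero])
        (fun h => by rw [h, smul_zero]))
  have hpos : ∀ x, 0 ≤ (1 + p.1 • fderiv ℝ η x + p.2 • fderiv ℝ ξ x).det := fun x => by
    rcases fderiv_eq_zero_or_fderiv_eq_zero hdisj x with h | h <;>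
      simp only [h, smul_zero, add_zero]
    exacts [(hpξ _ (Set.mem_range_self x)).le, (hpη _ (Set.mem_range_self x)).le]
  have hIη : IntegrableOn (fun x => (1 + p.1 • fderiv ℝ η x).det) Ω μ :=
    integrableOn_comp_of_isCompact_range (g := fun L => (1 + p.1 • L).det)
      (ContinuousLinearMap.continuous_det.comp (by fun_prop)) hDη hKη hΩ
  have hIξ : IntegrableOn (fun x => (1 + p.2 • fderiv ℝ ξ x).det) Ω μ :=
    integrableOn_comp_of_isCompact_range (g := fun L => (1 + p.2 • L).det)
      (ContinuousLinearMap.continuous_det.comp (by fun_prop)) hDξ hKξ hΩ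
  have hIΦ : IntegrableOn (fun x => (1 + p.1 • fderiv ℝ η x + p.2 • fderiv ℝ ξ x).det) Ω μ := by
    simp_rw [hdet]
    exact (hIη.add hIξ).sub (integrableOn_const hΩ)
  rw [addHaar_image_eq_ofReal_integral_det μ hΩm (fun x _ => (hderiv x).hasFDerivWithinAt)
    hinj.injOn (fun x _ => hpos x) hIΦ]
  simp_rw [hdet]
  rw [integral_sub (hIη.fun_add hIξ) (integrableOn_const hΩ), integral_add hIη hIξ,
    setIntegral_const, smul_eq_mul, mul_one]

end VolumeOfImage

theorem exists_contDiffAt_eventually_comp_eq {n : WithTop ℕ∞} (hn : n ≠ 0) {G H : ℝ → ℝ}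
    {a b c g : ℝ} (hG : ContDiffAt ℝ n G a) (hG' : HasDerivAt G g a) (hH : ContDiffAt ℝ n H b)
    (hH' : HasDerivAt H c b) (hc : c ≠ 0) (hGH : G a = H b) :
    ∃ f : ℝ → ℝ, f a = b ∧ ContDiffAt ℝ n f a ∧ (∀ᶠ t in 𝓝 a, H (f t) = G t) ∧
      HasDerivAt f (g / c) a := by
  set e : ℝ ≃L[ℝ] ℝ := ContinuousLinearEquiv.unitsEquivAut ℝ (Units.mk0 c hc)
  have hHe : HasFDerivAt H (e : ℝ →L[ℝ] ℝ) b := by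
    have he : (e : ℝ →L[ℝ] ℝ) = ContinuousLinearMap.toSpanSingleton ℝ c := by
      ext
      simp [e]
    exact he ▸ hH'.hasFDerivAt
  set f := hH.localInverse hHe hn ∘ G
  have hfa : f a = b := by simp [f, hGH, hH.localInverse_apply_image hHe hn]
  have hf : ContDiffAt ℝ n f a :=
    (hGH ▸ hH.to_localInverse hHe hn :
      ContDiffAt ℝ n (hH.localInverse hHe hn) (G a)).comp a hG
  have hHf : ∀ᶠ t in 𝓝 a, H (f t) = G t :=
    (hGH ▸ hG.continuousAt.tendsto : Tendsto G (𝓝 a) (𝓝 (H b))).eventually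
      (hH.hasStrictFDerivAt' hHe hn).eventually_right_inverse
  refine ⟨f, hfa, hf, hHf, ?_⟩
  have hfd := (hf.differentiableAt hn).hasDerivAt
  have hchain : c * deriv f a = g :=
    ((hfa ▸ hH' : HasDerivAt H c (f a)).comp a hfd).unique (hG'.congr_of_eventuallyEq hHf)
  rwa [← hchain, mul_div_cancel_left₀ _ hc]

lemma Polynomial.contDiff_eval (P : ℝ[X]) {n : WithTop ℕ∞} : ContDiff ℝ n fun t => P.eval t := by
  simpa only [aeval_def, Algebra.algebraMap_self, eval₂_id] using P.contDiff_aeval (𝕜 := ℝ) n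

lemma Polynomial.hasDerivAt_eval_zero (P : ℝ[X]) :
    HasDerivAt (fun t => P.eval t) (P.coeff 1) 0 := by
  simpa [← coeff_zero_eq_eval_zero, coeff_derivative] using P.hasDerivAt 0

theorem stmt_7_general {d : ℕ} (D Ω : Set (EuclideanSpace ℝ (Fin d)))
    (hDb : Bornology.IsBounded D)
    (hΩ : IsOpen Ω) (hΩD : Ω ⊆ D)
    (η ξ : EuclideanSpace ℝ (Fin d) → EuclideanSpace ℝ (Fin d))
    (hη : ContDiff ℝ (⊤ : ℕ∞) η) (hηc : HasCompactSupport η)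
    (hξ : ContDiff ℝ (⊤ : ℕ∞) ξ) (hξc : HasCompactSupport ξ)
    (hdisj : Disjoint (tsupport η) (tsupport ξ))
    (hne : (∫ x in Ω, vdiv ξ x) ≠ 0) :
    ∃ t₀ > (0 : ℝ), ∃ f : ℝ → ℝ,
      ContDiffOn ℝ (⊤ : ℕ∞) f (Set.Ioo (-t₀) t₀) ∧
      f 0 = 0 ∧
      (∀ t : ℝ, |t| < t₀ →
        volume ((fun x => x + t • η x + f t • ξ x) '' Ω) = volume Ω) ∧
      deriv f 0 * (∫ x in Ω, vdiv ξ x) = -(∫ x in Ω, vdiv η x) := by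
  have hΩfin : volume Ω ≠ ∞ := (hDb.subset hΩD).measure_lt_top.ne
  have hη1 : ContDiff ℝ 1 η := hη.of_le (by simp)
  have hξ1 : ContDiff ℝ 1 ξ := hξ.of_le (by simp)
  obtain ⟨P, hP0, hP1 : P.coeff 1 = ∫ x in Ω, vdiv η x, hP⟩ :=
    exists_polynomial_eval_eq_setIntegral_det (hη1.continuous_fderiv one_ne_zero)
      (hηc.fderiv (𝕜 := ℝ)) hΩfin
  obtain ⟨Q, hQ0, hQ1 : Q.coeff 1 = ∫ x in Ω, vdiv ξ x, hQ⟩ :=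
    exists_polynomial_eval_eq_setIntegral_det (hξ1.continuous_fderiv one_ne_zero)
      (hξc.fderiv (𝕜 := ℝ)) hΩfin
  obtain ⟨f, hf0, hf, hQf, hf'⟩ := exists_contDiffAt_eventually_comp_eq (n := ⊤) (by simp)
    (G := fun t => 2 * volume.real Ω - P.eval t) (H := fun s => Q.eval s) (a := 0) (b := 0)
    (contDiff_const.sub P.contDiff_eval).contDiffAt
    ((hasDerivAt_const _ _).sub P.hasDerivAt_eval_zero) Q.contDiff_eval.contDiffAt
    Q.hasDerivAt_eval_zero (hQ1 ▸ hne) (by simp [← coeff_zero_eq_eval_zero, hP0, hQ0]; ring)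
  obtain ⟨u, hu, hfu⟩ := hf.contDiffOn (m := ((⊤ : ℕ∞) : WithTop ℕ∞)) le_top (fun _ => rfl)
  have hcurve : Tendsto (fun t => (t, f t)) (𝓝 0) (𝓝 0) := by
    simpa [hf0, Prod.zero_eq_mk] using tendsto_id.prodMk_nhds hf.continuousAt.tendsto
  have hvol := hcurve.eventually (eventually_addHaar_image_add_smul_add_smul volume
    hΩ.measurableSet hΩfin hη1 hηc hξ1 hξc hdisj)
  obtain ⟨t₀, ht₀, hball⟩ := Metric.eventually_nhds_iff.1 (hvol.and (hQf.and hu))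
  refine ⟨t₀, ht₀, f, hfu.mono fun t ht => (hball ?_).2.2, hf0, fun t ht => ?_, ?_⟩
  · simpa [Real.dist_eq, abs_lt] using ht
  · obtain ⟨hvolt, hQft, -⟩ := hball (by simpa using ht)
    dsimp only at hvolt
    rw [hvolt, ← hP, ← hQ, hQft, ← ofReal_measureReal hΩfin]
    congr 1
    ring
  · rw [hf'.deriv, hQ1, div_mul_cancel₀ _ hne, hP1, zero_sub]

theorem stmt_7 {d : ℕ} (D Ω : Set (EuclideanSpace ℝ (Fin d)))
    (hD : IsOpen D) (hDb : Bornology.IsBounded D)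
    (hΩ : IsOpen Ω) (hΩD : Ω ⊆ D)
    (η ξ : EuclideanSpace ℝ (Fin d) → EuclideanSpace ℝ (Fin d))
    (hη : ContDiff ℝ (⊤ : ℕ∞) η) (hηc : HasCompactSupport η) (hηD : tsupport η ⊆ D)
    (hξ : ContDiff ℝ (⊤ : ℕ∞) ξ) (hξc : HasCompactSupport ξ) (hξD : tsupport ξ ⊆ D)
    (hdisj : Disjoint (tsupport η) (tsupport ξ))
    (hne : (∫ x in Ω, vdiv ξ x) ≠ 0) :
    ∃ t₀ > (0 : ℝ), ∃ f : ℝ → ℝ,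
      ContDiffOn ℝ (⊤ : ℕ∞) f (Set.Ioo (-t₀) t₀) ∧
      f 0 = 0 ∧
      (∀ t : ℝ, |t| < t₀ →
        volume ((fun x => x + t • η x + f t • ξ x) '' Ω) = volume Ω) ∧
      deriv f 0 * (∫ x in Ω, vdiv ξ x) = -(∫ x in Ω, vdiv η x) :=
  stmt_7_general D Ω hDb hΩ hΩD η ξ hη hηc hξ hξc hdisj hne
end
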